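/- Let X be a real Banach space that is an L₁-predual, let F be a nonempty compact subset of X, and let V be a nonempty closed convex subset of X. Then cent_V(F) is nonempty if and only if there exist v₀ ∈ V and x₀ ∈ cent_X(F) such that ‖v₀ − x₀‖ = d(V, cent_X(F)), where d(A,B) = inf{‖a − b‖ : a ∈ A, b ∈ B}. -/

import Mathlib

open Filter Topology MeasureTheory

/-- `r(x,B) = sup{‖x − b‖ : b ∈ B}`. -/
noncomputable def rMax {X : Type*} [NormedAddCommGroup X] (x : X) (B : Set X) : ℝ :=
  sSup ((fun b => ‖x - b‖) '' B)

/-- Restricted Chebyshev radius of `B` in `V`: `rad_V(B) = inf{r(v,B) : v ∈ V}`. -/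
noncomputable def chebRad {X : Type*} [NormedAddCommGroup X] (V B : Set X) : ℝ :=
  sInf ((fun v => rMax v B) '' V)

/-- Restricted Chebyshev centers of `B` in `V`: `{v ∈ V : r(v,B) = rad_V(B)}`. -/
def chebCent {X : Type*} [NormedAddCommGroup X] (V B : Set X) : Set X :=
  {v | v ∈ V ∧ rMax v B = chebRad V B}

/-- `diam(B) = sup{‖z₁ − z₂‖ : z₁, z₂ ∈ B}`. -/
noncomputable def setDiam {X : Type*} [NormedAddCommGroup X] (B : Set X) : ℝ :=
  sSup ((fun p : X × X => ‖p.1 - p.2‖) '' (B ×ˢ B))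

/-- `d(A,B) = inf{‖a − b‖ : a ∈ A, b ∈ B}`. -/
noncomputable def setDist' {X : Type*} [NormedAddCommGroup X] (A B : Set X) : ℝ :=
  sInf ((fun p : X × X => ‖p.1 - p.2‖) '' (A ×ˢ B))

universe u

/-- `X` is an `L₁`-predual: its dual is linearly isometric to some `L¹(μ)`. -/
def IsL1Predual (X : Type*) [NormedAddCommGroup X] [NormedSpace ℝ X] : Prop :=
  ∃ (Ω : Type u) (_ : MeasurableSpace Ω) (μ : Measure Ω),
    Nonempty (StrongDual ℝ X ≃ₗᵢ[ℝ] Lp ℝ 1 μ)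


lemma lpCoeFn_sum {α E : Type*} [MeasurableSpace α] [NormedAddCommGroup E] {p : ENNReal}
    {μ : Measure α} {κ : Type*} (t : Finset κ) (f : κ → Lp E p μ) :
    ⇑(∑ k ∈ t, f k) =ᵐ[μ] fun ω => ∑ k ∈ t, f k ω := by
  classical
  induction t using Finset.induction_on with
  | empty => simp only [Finset.sum_empty]; exact Lp.coeFn_zero E p μ
  | @insert a t ha ih =>
    rw [Finset.sum_insert ha]
    filter_upwards [Lp.coeFn_add (f a) (∑ k ∈ t, f k), ih] with ω h1 h2
    rw [h1, Finset.sum_insert ha, Pi.add_apply, h2]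

lemma helly1d {ι : Type*} [Fintype ι] [Nonempty ι] (t r c : ι → ℝ) (M : ℝ)
    (hpair : ∀ i j, |t i - t j| ≤ M * (r i + r j)) (hc : (∑ i, c i) = 0) :
    ∑ i, c i * t i ≤ M * ∑ i, |c i| * r i := by
  obtain ⟨i₀, -, hmax⟩ := Finset.exists_max_image Finset.univ (fun i => t i - M * r i)
    Finset.univ_nonempty
  set θ := t i₀ - M * r i₀ with hθ
  have hub : ∀ i, |t i - θ| ≤ M * r i := by
    intro i
    rw [abs_le]
    constructor
    · have : t i₀ - t i ≤ M * (r i₀ + r i) := by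
        linarith [le_abs_self (t i₀ - t i), (abs_le.1 (hpair i₀ i)).2]
      simp only [hθ]
      nlinarith
    · have := hmax i (Finset.mem_univ i)
      linarith
  have h1 : ∑ i, c i * (t i - θ) = ∑ i, c i * t i := by
    simp only [mul_sub]
    rw [Finset.sum_sub_distrib, ← Finset.sum_mul, hc]
    ring
  rw [← h1, Finset.mul_sum]
  apply Finset.sum_le_sum
  intro i _
  calc c i * (t i - θ) ≤ |c i * (t i - θ)| := le_abs_self _
    _ = |c i| * |t i - θ| := abs_mul _ _
    _ ≤ |c i| * (M * r i) := mul_le_mul_of_nonneg_left (hub i) (abs_nonneg _)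
    _ = M * (|c i| * r i) := by ring

section Basics
variable {X : Type*} [NormedAddCommGroup X] {F : Set X}

lemma bddAbove_rMax (hF : Bornology.IsBounded F) (x : X) :
    BddAbove ((fun b => ‖x - b‖) '' F) := by
  obtain ⟨C, hC⟩ := isBounded_iff_forall_norm_le.1 hF
  refine ⟨‖x‖ + C, ?_⟩
  rintro - ⟨f, hf, rfl⟩
  calc ‖x - f‖ ≤ ‖x‖ + ‖f‖ := norm_sub_le _ _
    _ ≤ ‖x‖ + C := by linarith [hC f hf]

lemma le_rMax (hF : Bornology.IsBounded F) (x : X) {f : X} (hf : f ∈ F) :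
    ‖x - f‖ ≤ rMax x F :=
  le_csSup (bddAbove_rMax hF x) ⟨f, hf, rfl⟩

lemma rMax_le (hne : F.Nonempty) (x : X) {c : ℝ} (hc : ∀ f ∈ F, ‖x - f‖ ≤ c) :
    rMax x F ≤ c :=
  csSup_le (hne.image _) (by rintro - ⟨f, hf, rfl⟩; exact hc f hf)

lemma rMax_nonneg (hne : F.Nonempty) (hF : Bornology.IsBounded F) (x : X) :
    0 ≤ rMax x F := by
  obtain ⟨f, hf⟩ := hne
  exact le_trans (norm_nonneg _) (le_rMax hF x hf)

lemma rMax_le_add (hne : F.Nonempty) (hF : Bornology.IsBounded F) (x y : X) :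
    rMax x F ≤ rMax y F + ‖x - y‖ := by
  apply rMax_le hne
  intro f hf
  calc ‖x - f‖ ≤ ‖x - y‖ + ‖y - f‖ := by
        have h : x - f = (x - y) + (y - f) := by abel
        rw [h]; exact norm_add_le _ _
    _ ≤ ‖x - y‖ + rMax y F := by linarith [le_rMax hF y hf]
    _ = rMax y F + ‖x - y‖ := by ring

lemma chebRad_le (hne : F.Nonempty) (hF : Bornology.IsBounded F) {V : Set X} {v : X}
    (hv : v ∈ V) : chebRad V F ≤ rMax v F := by
  refine csInf_le ⟨0, ?_⟩ ⟨v, hv, rfl⟩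
  rintro - ⟨w, hw, rfl⟩
  exact rMax_nonneg hne hF w

lemma le_chebRad {V : Set X} (hV : V.Nonempty) {c : ℝ}
    (hc : ∀ v ∈ V, c ≤ rMax v F) : c ≤ chebRad V F :=
  le_csInf (hV.image _) (by rintro - ⟨w, hw, rfl⟩; exact hc w hw)

lemma chebRad_nonneg (hne : F.Nonempty) (hF : Bornology.IsBounded F) {V : Set X}
    (hV : V.Nonempty) : 0 ≤ chebRad V F :=
  le_chebRad hV fun v _ => rMax_nonneg hne hF v

lemma diam_le_two_rad (hne : F.Nonempty) (hF : Bornology.IsBounded F) {f f' : X}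
    (hf : f ∈ F) (hf' : f' ∈ F) : ‖f - f'‖ ≤ 2 * chebRad Set.univ F := by
  have h : ∀ x : X, ‖f - f'‖ / 2 ≤ rMax x F := by
    intro x
    have h1 : ‖f - f'‖ ≤ ‖x - f‖ + ‖x - f'‖ := by
      calc ‖f - f'‖ = ‖(x - f') - (x - f)‖ := by rw [sub_sub_sub_cancel_left]
        _ ≤ ‖x - f'‖ + ‖x - f‖ := norm_sub_le _ _
        _ = ‖x - f‖ + ‖x - f'‖ := by ring
    linarith [le_rMax hF x hf, le_rMax hF x hf']
  have h2 := le_chebRad (V := Set.univ) ⟨f, trivial⟩ (fun v _ => h v)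
  linarith

end Basics

section Proof
variable {X : Type*} [NormedAddCommGroup X] [NormedSpace ℝ X]

attribute [local instance] MeasureTheory.Lp.simpleFunc.smul MeasureTheory.Lp.simpleFunc.module

lemma sum_dual_le_simple {ι : Type*} [Fintype ι] [Nonempty ι] [DecidableEq ι]
    {Ω : Type u} [MeasurableSpace Ω] {μ : Measure Ω}
    (T : StrongDual ℝ X ≃ₗᵢ[ℝ] Lp ℝ 1 μ)
    (x : ι → X) (r : ι → ℝ)
    (hpair : ∀ i j, ‖x i - x j‖ ≤ r i + r j)
    (s : ι → Lp.simpleFunc ℝ 1 μ) (hs : (∑ i, ((s i : Lp ℝ 1 μ))) = 0) :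
    ∑ i, (T.symm (s i : Lp ℝ 1 μ)) (x i) ≤ ∑ i, ‖(s i : Lp ℝ 1 μ)‖ * r i := by
  classical
  set u : ι → SimpleFunc Ω ℝ := fun i => Lp.simpleFunc.toSimpleFunc (s i) with hu_def
  have hu : ∀ i, (u i : Ω → ℝ) =ᵐ[μ] ((s i : Lp ℝ 1 μ) : Ω → ℝ) :=
    fun i => Lp.simpleFunc.toSimpleFunc_eq_toFun (s i)
  have huint : ∀ i, Integrable (u i) μ := by
    intro i
    refine (integrable_congr (hu i).symm).1 ?_
    exact memLp_one_iff_integrable.1 (Lp.memLp _)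
  set P : Finset (ι → ℝ) := Fintype.piFinset (fun i => (u i).range) with hP_def
  set P₀ : Finset (ι → ℝ) := P.filter (fun v => v ≠ 0) with hP0_def
  set A : (ι → ℝ) → Set Ω := fun v => ⋂ i, (u i) ⁻¹' {v i} with hA_def
  have hA : ∀ v, MeasurableSet (A v) := fun v =>
    MeasurableSet.iInter (fun i => (u i).measurableSet_fiber (v i))
  have hmemA : ∀ {ω v}, ω ∈ A v ↔ ∀ i, u i ω = v i := by
    intro ω v
    simp [hA_def, Set.mem_iInter]
  have hfin : ∀ v ∈ P₀, μ (A v) ≠ ⊤ := by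
    intro v hv
    rw [hP0_def, Finset.mem_filter] at hv
    obtain ⟨-, hvne⟩ := hv
    obtain ⟨i, hi⟩ : ∃ i, v i ≠ 0 := by
      by_contra h
      push_neg at h
      exact hvne (funext h)
    have hsub : A v ⊆ (u i) ⁻¹' {v i} := Set.iInter_subset _ i
    exact ne_top_of_le_ne_top
      ((u i).measure_preimage_lt_top_of_integrable (huint i) hi).ne (measure_mono hsub)
  set e : P₀ → Lp ℝ 1 μ := fun v => indicatorConstLp 1 (hA v.1) (hfin v.1 v.2) (1 : ℝ)
    with he_def
  -- pointwise description
  have hpattern : ∀ ω, (fun i => u i ω) ∈ P := by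
    intro ω
    rw [hP_def, Fintype.mem_piFinset]
    exact fun i => (u i).mem_range_self ω
  have hptw : ∀ g : ℝ → ℝ, g 0 = 0 → ∀ i ω,
      g (u i ω) = ∑ v ∈ P₀.attach, g (v.1 i) * (A v.1).indicator (fun _ => (1:ℝ)) ω := by
    intro g hg0 i ω
    set w : ι → ℝ := fun j => u j ω with hw_def
    have hwA : ω ∈ A w := hmemA.2 fun j => rfl
    have hnot : ∀ v : P₀, v.1 ≠ w → ω ∉ A v.1 := by
      intro v hvw hmem
      exact hvw (funext fun j => ((hmemA.1 hmem) j).symm)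
    by_cases hw0 : w = 0
    · have hz : ∀ v ∈ P₀.attach, g (v.1 i) * (A v.1).indicator (fun _ => (1:ℝ)) ω = 0 := by
        intro v _
        have hvw : v.1 ≠ w := by
          intro h
          exact (Finset.mem_filter.1 v.2).2 (h.trans hw0)
        rw [Set.indicator_of_notMem (hnot v hvw)]
        ring
      rw [Finset.sum_eq_zero hz]
      have h0 : u i ω = 0 := by
        have := congrFun hw0 i
        simpa [hw_def] using this
      rw [h0, hg0]
    · have hwP₀ : w ∈ P₀ := Finset.mem_filter.2 ⟨hpattern ω, hw0⟩
      rw [Finset.sum_eq_single_of_mem (⟨w, hwP₀⟩ : P₀) (Finset.mem_attach _ _)]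
      · rw [Set.indicator_of_mem hwA]
        simp [hw_def]
      · intro v _ hv
        have hvw : v.1 ≠ w := fun h => hv (Subtype.ext h)
        rw [Set.indicator_of_notMem (hnot v hvw)]
        ring
  -- representation in Lp
  have hind : ∀ v : P₀, ⇑(e v) =ᵐ[μ] (A v.1).indicator (fun _ => (1:ℝ)) :=
    fun v => indicatorConstLp_coeFn
  have hrep : ∀ i, (s i : Lp ℝ 1 μ) = ∑ v ∈ P₀.attach, v.1 i • e v := by
    intro i
    apply Lp.ext
    have h1 : ∀ᵐ ω ∂μ, ∀ v ∈ P₀.attach, ⇑(v.1 i • e v) ω = v.1 i * (A v.1).indicator (fun _ => (1:ℝ)) ω := by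
      rw [eventually_all_finset]
      intro v _
      filter_upwards [Lp.coeFn_smul (v.1 i) (e v), hind v] with ω hω1 hω2
      rw [hω1, Pi.smul_apply, hω2, smul_eq_mul]
    filter_upwards [(hu i).symm, lpCoeFn_sum P₀.attach (fun v => v.1 i • e v), h1] with ω hω0 hω1 hω2
    rw [hω0, hω1]
    refine (hptw (fun z => z) rfl i ω).trans ?_
    exact Finset.sum_congr rfl fun v hv => (hω2 v hv).symm
  -- norm computation
  have hnorm : ∀ i, ‖(s i : Lp ℝ 1 μ)‖ = ∑ v ∈ P₀.attach, |v.1 i| * (μ (A v.1)).toReal := by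
    intro i
    rw [L1.norm_eq_integral_norm]
    have hcongr : ∫ ω, ‖((s i : Lp ℝ 1 μ) : Ω → ℝ) ω‖ ∂μ
        = ∫ ω, ∑ v ∈ P₀.attach, |v.1 i| * (A v.1).indicator (fun _ => (1:ℝ)) ω ∂μ := by
      apply integral_congr_ae
      filter_upwards [hu i] with ω hω
      rw [← hω, Real.norm_eq_abs]
      exact hptw (fun z => |z|) abs_zero i ω
    rw [hcongr, integral_finset_sum]
    · apply Finset.sum_congr rfl
      intro v _
      rw [MeasureTheory.integral_const_mul, integral_indicator_const (1:ℝ) (hA v.1)]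
      simp [measureReal_def]
    · intro v _
      apply Integrable.const_mul
      rw [integrable_indicator_iff (hA v.1)]
      exact integrableOn_const (hfin v.1 v.2)
  -- sum of values on each piece of positive measure is zero
  have hzero : ∀ v : P₀, μ (A v.1) ≠ 0 → (∑ i, v.1 i) = 0 := by
    intro v hv
    have hae : ∀ᵐ ω ∂μ, (∀ i, u i ω = ((s i : Lp ℝ 1 μ) : Ω → ℝ) ω) ∧
        (⇑(∑ i, ((s i : Lp ℝ 1 μ))) ω = ∑ i, ((s i : Lp ℝ 1 μ) : Ω → ℝ) ω) ∧
        (⇑(∑ i, ((s i : Lp ℝ 1 μ))) ω = 0) := by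
      refine ((ae_all_iff.2 hu).and ((lpCoeFn_sum Finset.univ _).and ?_))
      have : ⇑(∑ i, ((s i : Lp ℝ 1 μ))) =ᵐ[μ] (0 : Ω → ℝ) := by
        rw [hs]
        exact Lp.coeFn_zero ℝ 1 μ
      filter_upwards [this] with ω hω using hω
    have hres : ∀ᵐ ω ∂μ.restrict (A v.1), (∀ i, u i ω = ((s i : Lp ℝ 1 μ) : Ω → ℝ) ω) ∧
        (⇑(∑ i, ((s i : Lp ℝ 1 μ))) ω = ∑ i, ((s i : Lp ℝ 1 μ) : Ω → ℝ) ω) ∧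
        (⇑(∑ i, ((s i : Lp ℝ 1 μ))) ω = 0) := ae_restrict_of_ae hae
    have hmem : ∀ᵐ ω ∂μ.restrict (A v.1), ω ∈ A v.1 := ae_restrict_mem (hA v.1)
    have hnb : (ae (μ.restrict (A v.1))).NeBot := by
      rw [ae_neBot]
      intro h
      apply hv
      have := congrArg (fun m => m Set.univ) h
      simpa [Measure.restrict_apply_univ] using this
    obtain ⟨ω, ⟨hω1, hω2, hω3⟩, hωA⟩ := (hres.and hmem).exists
    have : ∑ i, u i ω = 0 := by
      rw [Finset.sum_congr rfl (fun i _ => hω1 i), ← hω2, hω3]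
    rw [← this]
    exact (Finset.sum_congr rfl fun i _ => (hmemA.1 hωA i).symm)
  -- final computation
  have happ : ∀ i, (T.symm (s i : Lp ℝ 1 μ)) (x i)
      = ∑ v ∈ P₀.attach, v.1 i * (T.symm (e v)) (x i) := by
    intro i
    rw [hrep i, map_sum]
    rw [ContinuousLinearMap.sum_apply]
    apply Finset.sum_congr rfl
    intro v _
    rw [LinearIsometryEquiv.map_smul, ContinuousLinearMap.smul_apply, smul_eq_mul]
  have hM : ∀ v : P₀, ‖T.symm (e v)‖ = (μ (A v.1)).toReal := by
    intro v
    rw [LinearIsometryEquiv.norm_map]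
    rw [norm_indicatorConstLp one_ne_zero ENNReal.one_ne_top]
    simp [measureReal_def]
  have hkey : ∀ v : P₀, ∑ i, v.1 i * (T.symm (e v)) (x i)
      ≤ (μ (A v.1)).toReal * ∑ i, |v.1 i| * r i := by
    intro v
    by_cases hv0 : μ (A v.1) = 0
    · have he0 : T.symm (e v) = 0 := by
        have : ‖T.symm (e v)‖ = 0 := by rw [hM v, hv0]; simp
        exact norm_eq_zero.1 this
      rw [he0, hv0]
      simp
    · apply helly1d (fun i => (T.symm (e v)) (x i)) r (fun i => v.1 i)
      · intro i j
        have h1 : (T.symm (e v)) (x i) - (T.symm (e v)) (x j) = (T.symm (e v)) (x i - x j) := by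
          rw [map_sub]
        rw [h1]
        calc |(T.symm (e v)) (x i - x j)| ≤ ‖T.symm (e v)‖ * ‖x i - x j‖ := by
              rw [← Real.norm_eq_abs]
              exact (T.symm (e v)).le_opNorm _
          _ ≤ (μ (A v.1)).toReal * (r i + r j) := by
              rw [hM v]
              exact mul_le_mul_of_nonneg_left (hpair i j) ENNReal.toReal_nonneg
      · exact hzero v hv0
  calc ∑ i, (T.symm (s i : Lp ℝ 1 μ)) (x i)
      = ∑ i, ∑ v ∈ P₀.attach, v.1 i * (T.symm (e v)) (x i) :=
        Finset.sum_congr rfl fun i _ => happ i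
    _ = ∑ v ∈ P₀.attach, ∑ i, v.1 i * (T.symm (e v)) (x i) := Finset.sum_comm
    _ ≤ ∑ v ∈ P₀.attach, (μ (A v.1)).toReal * ∑ i, |v.1 i| * r i :=
        Finset.sum_le_sum fun v _ => hkey v
    _ = ∑ i, (∑ v ∈ P₀.attach, |v.1 i| * (μ (A v.1)).toReal) * r i := by
        simp only [Finset.mul_sum]
        rw [Finset.sum_comm]
        refine Finset.sum_congr rfl fun i _ => ?_
        rw [Finset.sum_mul]
        exact Finset.sum_congr rfl fun v _ => by ring
    _ = ∑ i, ‖(s i : Lp ℝ 1 μ)‖ * r i :=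
        Finset.sum_congr rfl fun i _ => by rw [hnorm i]

set_option maxHeartbeats 1000000 in
lemma sum_dual_le {ι : Type*} [Fintype ι] [Nonempty ι]
    {Ω : Type u} [MeasurableSpace Ω] {μ : Measure Ω}
    (T : StrongDual ℝ X ≃ₗᵢ[ℝ] Lp ℝ 1 μ)
    (x : ι → X) (r : ι → ℝ)
    (hpair : ∀ i j, ‖x i - x j‖ ≤ r i + r j)
    (g : ι → StrongDual ℝ X) (hg : (∑ i, g i) = 0) :
    ∑ i, g i (x i) ≤ ∑ i, ‖g i‖ * r i := by
  classical
  have hr : ∀ i, 0 ≤ r i := by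
    intro i
    have := hpair i i
    simp at this
    linarith
  set n : ℕ := Fintype.card ι with hn
  have hn0 : 0 < (n : ℝ) := by
    have := Fintype.card_pos_iff.2 (inferInstance : Nonempty ι)
    exact_mod_cast this
  refine le_of_forall_pos_le_add ?_
  intro ε hε
  set C : ℝ := 1 + ∑ i, (r i + ‖x i‖) with hC
  have hC0 : 0 < C := by
    have : 0 ≤ ∑ i, (r i + ‖x i‖) :=
      Finset.sum_nonneg fun i _ => add_nonneg (hr i) (norm_nonneg _)
    simp only [hC]; linarith
  set δ : ℝ := ε / (2 * C) with hδ
  have hδ0 : 0 < δ := by positivity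
  set h : ι → Lp ℝ 1 μ := fun i => T (g i) with hh
  -- choose simple approximations
  have hdense := Lp.simpleFunc.denseRange (E := ℝ) (μ := μ) (ENNReal.one_ne_top)
  have hex : ∀ i, ∃ s : Lp.simpleFunc ℝ 1 μ, ‖(s : Lp ℝ 1 μ) - h i‖ < δ := by
    intro i
    obtain ⟨s, hschoice⟩ := Metric.denseRange_iff.1 hdense (h i) δ hδ0
    exact ⟨s, by rwa [← dist_eq_norm, dist_comm]⟩
  choose s hsδ using hex
  set savg : Lp.simpleFunc ℝ 1 μ := (n : ℝ)⁻¹ • (∑ j, s j) with hsavg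
  set s' : ι → Lp.simpleFunc ℝ 1 μ := fun i => s i - savg with hs'
  have hsum' : (∑ i, ((s' i : Lp ℝ 1 μ))) = 0 := by
    have hcoe : ∀ i, ((s' i : Lp ℝ 1 μ)) = (s i : Lp ℝ 1 μ)
        - (n : ℝ)⁻¹ • (∑ j, (s j : Lp ℝ 1 μ)) := by
      intro i
      simp only [hs', hsavg, AddSubgroup.coe_sub, Lp.simpleFunc.coe_smul]
      congr 1
      congr 1
      exact map_sum (AddSubgroup.subtype _) s Finset.univ
    rw [Finset.sum_congr rfl fun i _ => hcoe i]
    rw [Finset.sum_sub_distrib, Finset.sum_const, Finset.card_univ]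
    rw [← Nat.cast_smul_eq_nsmul ℝ, smul_smul, mul_inv_cancel₀ (ne_of_gt hn0), one_smul]
    simp
  have hclose : ∀ i, ‖(s' i : Lp ℝ 1 μ) - h i‖ ≤ 2 * δ := by
    intro i
    have hcoe : ((s' i : Lp ℝ 1 μ)) = (s i : Lp ℝ 1 μ)
        - (n : ℝ)⁻¹ • (∑ j, (s j : Lp ℝ 1 μ)) := by
      simp only [hs', hsavg, AddSubgroup.coe_sub, Lp.simpleFunc.coe_smul]
      congr 1
      congr 1
      exact map_sum (AddSubgroup.subtype _) s Finset.univ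
    have hsumbound : ‖∑ j, (s j : Lp ℝ 1 μ)‖ ≤ n * δ := by
      have h0 : (∑ j, (s j : Lp ℝ 1 μ)) = ∑ j, ((s j : Lp ℝ 1 μ) - h j) := by
        rw [Finset.sum_sub_distrib]
        have : (∑ j, h j) = 0 := by
          rw [hh, ← map_sum, hg, map_zero]
        rw [this, sub_zero]
      rw [h0]
      calc ‖∑ j, ((s j : Lp ℝ 1 μ) - h j)‖ ≤ ∑ j, ‖(s j : Lp ℝ 1 μ) - h j‖ :=
            norm_sum_le _ _
        _ ≤ ∑ _j : ι, δ := Finset.sum_le_sum fun j _ => (hsδ j).le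
        _ = n * δ := by rw [Finset.sum_const, Finset.card_univ]; simp [hn, nsmul_eq_mul]
    calc ‖(s' i : Lp ℝ 1 μ) - h i‖
        = ‖((s i : Lp ℝ 1 μ) - h i) - (n : ℝ)⁻¹ • (∑ j, (s j : Lp ℝ 1 μ))‖ := by
          rw [hcoe]; congr 1; abel
      _ ≤ ‖(s i : Lp ℝ 1 μ) - h i‖ + ‖(n : ℝ)⁻¹ • (∑ j, (s j : Lp ℝ 1 μ))‖ :=
          norm_sub_le _ _
      _ ≤ δ + (n : ℝ)⁻¹ * (n * δ) := by
          apply add_le_add (hsδ i).le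
          rw [norm_smul, Real.norm_eq_abs, abs_of_nonneg (by positivity)]
          exact mul_le_mul_of_nonneg_left hsumbound (by positivity)
      _ = 2 * δ := by field_simp; ring
  have hmain := sum_dual_le_simple T x r hpair s' hsum'
  have hstep1 : ∑ i, g i (x i) ≤ ∑ i, (T.symm (s' i : Lp ℝ 1 μ)) (x i) + 2 * δ * ∑ i, ‖x i‖ := by
    rw [Finset.mul_sum, ← Finset.sum_add_distrib]
    apply Finset.sum_le_sum
    intro i _
    have hgi : g i = T.symm (h i) := by rw [hh]; simp
    have hdiff : g i (x i) - (T.symm (s' i : Lp ℝ 1 μ)) (x i)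
        = (T.symm (h i - (s' i : Lp ℝ 1 μ))) (x i) := by
      rw [map_sub, hgi, ContinuousLinearMap.sub_apply]
    have : (T.symm (h i - (s' i : Lp ℝ 1 μ))) (x i) ≤ 2 * δ * ‖x i‖ := by
      calc (T.symm (h i - (s' i : Lp ℝ 1 μ))) (x i)
          ≤ ‖T.symm (h i - (s' i : Lp ℝ 1 μ))‖ * ‖x i‖ := by
            have := (T.symm (h i - (s' i : Lp ℝ 1 μ))).le_opNorm (x i)
            exact le_trans (le_abs_self _) (by rwa [← Real.norm_eq_abs])
        _ ≤ 2 * δ * ‖x i‖ := by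
            apply mul_le_mul_of_nonneg_right _ (norm_nonneg _)
            rw [LinearIsometryEquiv.norm_map, ← norm_neg, neg_sub]
            exact hclose i
    linarith [hdiff ▸ this]
  have hstep2 : ∑ i, ‖(s' i : Lp ℝ 1 μ)‖ * r i ≤ ∑ i, ‖g i‖ * r i + 2 * δ * ∑ i, r i := by
    rw [Finset.mul_sum, ← Finset.sum_add_distrib]
    apply Finset.sum_le_sum
    intro i _
    have : ‖(s' i : Lp ℝ 1 μ)‖ ≤ ‖g i‖ + 2 * δ := by
      calc ‖(s' i : Lp ℝ 1 μ)‖ ≤ ‖h i‖ + ‖(s' i : Lp ℝ 1 μ) - h i‖ := by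
            have := norm_add_le (h i) ((s' i : Lp ℝ 1 μ) - h i)
            simpa using this
        _ ≤ ‖g i‖ + 2 * δ := by
            apply add_le_add _ (hclose i)
            rw [hh, LinearIsometryEquiv.norm_map]
    nlinarith [hr i, norm_nonneg (g i)]
  have hfinal : 2 * δ * ∑ i, ‖x i‖ + 2 * δ * ∑ i, r i ≤ ε := by
    have : 2 * δ * (∑ i, ‖x i‖ + ∑ i, r i) ≤ 2 * δ * C := by
      apply mul_le_mul_of_nonneg_left _ (by positivity)
      rw [hC, ← Finset.sum_add_distrib]
      have : ∑ i, (‖x i‖ + r i) = ∑ i, (r i + ‖x i‖) :=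
        Finset.sum_congr rfl fun i _ => by ring
      linarith [this]
    have h2 : 2 * δ * C = ε := by
      rw [hδ]; field_simp
    nlinarith
  linarith [hstep1, hstep2, hmain]

set_option maxHeartbeats 1000000 in
lemma finite_balls_almost_inter {ι : Type*} [Fintype ι] [Nonempty ι]
    {Ω : Type u} [MeasurableSpace Ω] {μ : Measure Ω}
    (T : StrongDual ℝ X ≃ₗᵢ[ℝ] Lp ℝ 1 μ)
    (x : ι → X) (r : ι → ℝ)
    (hpair : ∀ i j, ‖x i - x j‖ ≤ r i + r j)
    {ε : ℝ} (hε : 0 < ε) :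
    ∃ z : X, ∀ i, ‖z - x i‖ ≤ r i + ε := by
  classical
  have hr : ∀ i, 0 ≤ r i := by
    intro i
    have := hpair i i
    simp at this
    linarith
  by_contra hcon
  push_neg at hcon
  set K : Set (ι → X) :=
    {w | ∃ z : X, ∃ b : ι → X, (∀ i, ‖b i‖ ≤ r i) ∧ w = fun i => z - x i + b i} with hK
  have hKconv : Convex ℝ K := by
    rintro w₁ ⟨z₁, b₁, hb₁, rfl⟩ w₂ ⟨z₂, b₂, hb₂, rfl⟩ a c ha hc hac
    refine ⟨a • z₁ + c • z₂, fun i => a • b₁ i + c • b₂ i, fun i => ?_, ?_⟩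
    · calc ‖a • b₁ i + c • b₂ i‖ ≤ ‖a • b₁ i‖ + ‖c • b₂ i‖ := norm_add_le _ _
        _ = a * ‖b₁ i‖ + c * ‖b₂ i‖ := by
            rw [norm_smul, norm_smul, Real.norm_eq_abs, Real.norm_eq_abs,
              abs_of_nonneg ha, abs_of_nonneg hc]
        _ ≤ a * r i + c * r i := add_le_add
            (mul_le_mul_of_nonneg_left (hb₁ i) ha) (mul_le_mul_of_nonneg_left (hb₂ i) hc)
        _ = r i := by rw [← add_mul, hac, one_mul]
    · funext i
      simp only [Pi.add_apply, Pi.smul_apply, smul_eq_mul]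
      match_scalars <;> simp [hac] <;> linarith
  have h0 : (0 : ι → X) ∉ closure K := by
    intro h0mem
    obtain ⟨w, hwK, hwd⟩ := Metric.mem_closure_iff.1 h0mem ε hε
    obtain ⟨z, b, hb, rfl⟩ := hwK
    obtain ⟨i, hi⟩ := hcon z
    have h1 : ‖z - x i + b i‖ ≤ ‖(fun i => z - x i + b i : ι → X)‖ :=
      norm_le_pi_norm (fun i => z - x i + b i : ι → X) i
    have h2 : ‖(fun i => z - x i + b i : ι → X)‖ < ε := by
      rwa [dist_comm, dist_zero_right] at hwd
    have h3 : ‖z - x i‖ ≤ ‖z - x i + b i‖ + ‖b i‖ := by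
      calc ‖z - x i‖ = ‖(z - x i + b i) - b i‖ := by rw [add_sub_cancel_right]
        _ ≤ ‖z - x i + b i‖ + ‖b i‖ := norm_sub_le _ _
    linarith [hb i, hi.le, h1, h2, h3]
  obtain ⟨f, c, hfc, hc0⟩ :=
    geometric_hahn_banach_closed_point (hKconv.closure) isClosed_closure h0
  rw [map_zero] at hc0
  -- coordinate functionals
  set sing : ι → X →L[ℝ] (ι → X) := fun i =>
    ContinuousLinearMap.pi (fun j => if j = i then ContinuousLinearMap.id ℝ X else 0)
    with hsing
  have hsing_apply : ∀ i (y : X), sing i y = Pi.single i y := by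
    intro i y
    funext j
    simp only [hsing, ContinuousLinearMap.pi_apply, Pi.single_apply]
    by_cases h : j = i <;> simp [h]
  set φ : ι → StrongDual ℝ X := fun i => f.comp (sing i) with hφ
  have hdecomp : ∀ w : ι → X, f w = ∑ i, φ i (w i) := by
    intro w
    conv_lhs => rw [← Finset.univ_sum_single w]
    rw [map_sum]
    exact Finset.sum_congr rfl fun i _ => by
      simp only [hφ, ContinuousLinearMap.comp_apply, hsing_apply]
  have hKlt : ∀ (z : X) (b : ι → X), (∀ i, ‖b i‖ ≤ r i) →
      (∑ i, φ i z) - (∑ i, φ i (x i)) + (∑ i, φ i (b i)) < c := by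
    intro z b hb
    have hmem : (fun i => z - x i + b i) ∈ K := ⟨z, b, hb, rfl⟩
    have hlt := hfc _ (subset_closure hmem)
    rw [hdecomp] at hlt
    have heq : ∑ i, φ i (z - x i + b i)
        = (∑ i, φ i z) - (∑ i, φ i (x i)) + (∑ i, φ i (b i)) := by
      rw [← Finset.sum_sub_distrib, ← Finset.sum_add_distrib]
      exact Finset.sum_congr rfl fun i _ => by rw [map_add, map_sub]
    linarith [heq ▸ hlt]
  -- the sum of the functionals vanishes
  have hlin : ∀ z : X, (∑ i, φ i z) = 0 := by
    have key : ∀ z : X, (∑ i, φ i z) ≤ 0 := by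
      intro z
      by_contra hpos
      push_neg at hpos
      set S := ∑ i, φ i z with hS
      set d := c + (∑ i, φ i (x i)) with hd
      have hbnd : ∀ t : ℝ, t * S < d := by
        intro t
        have h1 := hKlt (t • z) 0 (fun i => by simp [hr i])
        have hts : ∑ i, φ i (t • z) = t * S := by
          rw [hS, Finset.mul_sum]
          exact Finset.sum_congr rfl fun i _ => by
            rw [(φ i).map_smul, smul_eq_mul]
        simp only [Pi.zero_apply, map_zero, Finset.sum_const_zero, add_zero] at h1
        rw [hts] at h1
        linarith
      have h2 := hbnd ((d + 1) / S)
      rw [div_mul_cancel₀ _ (ne_of_gt hpos)] at h2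
      linarith
    intro z
    have h1 := key z
    have h2 := key (-z)
    have h3 : ∑ i, φ i (-z) = -∑ i, φ i z := by
      rw [← Finset.sum_neg_distrib]
      exact Finset.sum_congr rfl fun i _ => by rw [map_neg]
    linarith [h3 ▸ h2]
  -- near-norming vectors
  have hnear : ∀ (δ : ℝ), 0 < δ → ∀ i, ∃ b : X, ‖b‖ ≤ r i ∧ r i * ‖φ i‖ - δ ≤ φ i b := by
    intro δ hδ i
    by_cases hri0 : r i ≤ 0
    · have h00 : r i = 0 := le_antisymm hri0 (hr i)
      refine ⟨0, by simp [h00], by simp [h00]; linarith⟩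
    push_neg at hri0
    by_contra hno
    push_neg at hno
    set B : ℝ := ‖φ i‖ - δ / r i with hB
    have haux : ∀ y : X, ‖y‖ ≤ 1 → φ i y < B := by
      intro y hy
      have hb : ‖r i • y‖ ≤ r i := by
        rw [norm_smul, Real.norm_eq_abs, abs_of_pos hri0]
        nlinarith [norm_nonneg y]
      have h2 := hno (r i • y) hb
      have happ : φ i (r i • y) = r i * φ i y := by
        rw [(φ i).map_smul, smul_eq_mul]
      rw [happ] at h2
      have hBmul : r i * B = r i * ‖φ i‖ - δ := by
        rw [hB]; field_simp
      rw [← hBmul] at h2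
      exact lt_of_mul_lt_mul_left h2 hri0.le
    have hB0 : 0 < B := by
      have := haux 0 (by simp)
      simpa using this
    have habs : ∀ y : X, ‖y‖ = 1 → ‖φ i y‖ ≤ B := by
      intro y hy
      rw [Real.norm_eq_abs, abs_le]
      constructor
      · have := haux (-y) (by rw [norm_neg, hy])
        rw [map_neg] at this
        linarith
      · exact (haux y hy.le).le
    have hle : ‖φ i‖ ≤ B := by
      apply ContinuousLinearMap.opNorm_le_bound _ hB0.le
      intro y
      rcases eq_or_ne y 0 with rfl | hy0
      · simp
      have hy : 0 < ‖y‖ := norm_pos_iff.2 hy0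
      have hunit : ‖(‖y‖⁻¹ • y)‖ = 1 := by
        rw [norm_smul, Real.norm_eq_abs, abs_of_pos (by positivity : (0:ℝ) < ‖y‖⁻¹)]
        field_simp
      have h2 := habs _ hunit
      have happ : φ i (‖y‖⁻¹ • y) = ‖y‖⁻¹ * φ i y := by
        rw [(φ i).map_smul, smul_eq_mul]
      rw [happ, Real.norm_eq_abs, abs_mul, abs_of_pos (by positivity : (0:ℝ) < ‖y‖⁻¹),
        ← Real.norm_eq_abs] at h2
      calc ‖φ i y‖ = ‖y‖ * (‖y‖⁻¹ * ‖φ i y‖) := by field_simp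
        _ ≤ ‖y‖ * B := mul_le_mul_of_nonneg_left h2 hy.le
        _ = B * ‖y‖ := mul_comm _ _
    have : δ / r i ≤ 0 := by rw [hB] at hle; linarith
    have : 0 < δ / r i := by positivity
    linarith
  -- assemble the contradiction
  set n : ℕ := Fintype.card ι with hn
  set δ : ℝ := -c / (n + 1) with hδ
  have hδ0 : 0 < δ := by
    rw [hδ]
    apply div_pos (by linarith) (by positivity)
  choose b hb1 hb2 using hnear δ hδ0
  have hless := hKlt 0 b hb1
  rw [hlin 0] at hless
  have hsum_b : ∑ i, (r i * ‖φ i‖ - δ) ≤ ∑ i, φ i (b i) :=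
    Finset.sum_le_sum fun i _ => hb2 i
  have hsum_b' : ∑ i, (r i * ‖φ i‖ - δ) = (∑ i, r i * ‖φ i‖) - n * δ := by
    rw [Finset.sum_sub_distrib, Finset.sum_const, Finset.card_univ, nsmul_eq_mul]
  have hdual := sum_dual_le T x r hpair φ (by ext z; rw [ContinuousLinearMap.sum_apply]; exact hlin z)
  have hcomm : ∑ i, ‖φ i‖ * r i = ∑ i, r i * ‖φ i‖ :=
    Finset.sum_congr rfl fun i _ => mul_comm _ _
  have hnδ : (n : ℝ) * δ ≤ -c * (n / (n+1)) := le_of_eq (by rw [hδ]; ring)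
  have hc_neg : c < 0 := hc0
  have hfrac : -c * ((n:ℝ) / (n+1)) < -c := by
    have h1 : (n : ℝ) / (n+1) < 1 := by
      rw [div_lt_one (by positivity)]
      linarith
    nlinarith
  -- Σ r‖φ‖ - nδ ≤ Σ φ b < c + Σ φ x  and  Σ φ x ≤ Σ ‖φ‖ r
  have hx_le : ∑ i, φ i (x i) ≤ ∑ i, r i * ‖φ i‖ := hcomm ▸ hdual
  linarith [hsum_b' ▸ hsum_b, hless, hx_le, hnδ, hfrac]

lemma compact_balls_almost_inter
    {Ω : Type u} [MeasurableSpace Ω] {μ : Measure Ω}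
    (T : StrongDual ℝ X ≃ₗᵢ[ℝ] Lp ℝ 1 μ)
    {F : Set X} (hne : F.Nonempty) (hF : IsCompact F)
    {J : Type*} [Fintype J] (w : J → X) (sJ : J → ℝ) (R : ℝ)
    (hFF : ∀ f ∈ F, ∀ f' ∈ F, ‖f - f'‖ ≤ 2 * R)
    (hwF : ∀ j, ∀ f ∈ F, ‖w j - f‖ ≤ R + sJ j)
    (hww : ∀ j j', ‖w j - w j'‖ ≤ sJ j + sJ j')
    {ε : ℝ} (hε : 0 < ε) :
    ∃ z : X, (∀ f ∈ F, ‖z - f‖ ≤ R + ε) ∧ ∀ j, ‖z - w j‖ ≤ sJ j + ε := by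
  classical
  obtain ⟨t, htsub, htfin, htcover⟩ := totallyBounded_iff_subset.1 hF.totallyBounded
    _ (Metric.dist_mem_uniformity (half_pos hε))
  have htne : t.Nonempty := by
    obtain ⟨f, hf⟩ := hne
    obtain ⟨y, hy⟩ := Set.mem_iUnion₂.1 (htcover hf)
    exact ⟨y, hy.1⟩
  haveI : Fintype t := htfin.fintype
  haveI : Nonempty t := htne.to_subtype
  set ι := (t : Set X) ⊕ J with hι
  set xx : ι → X := Sum.elim (fun y => (y : X)) w with hxx
  set rr : ι → ℝ := Sum.elim (fun _ => R) sJ with hrr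
  have hpair : ∀ i j : ι, ‖xx i - xx j‖ ≤ rr i + rr j := by
    rintro (y | j) (y' | j')
    · simpa [hxx, hrr, two_mul] using hFF _ (htsub y.2) _ (htsub y'.2)
    · simpa [hxx, hrr, norm_sub_rev ((y : X)) (w j'), add_comm] using hwF j' _ (htsub y.2)
    · simpa [hxx, hrr, add_comm] using hwF j _ (htsub y'.2)
    · simpa [hxx, hrr] using hww j j'
  obtain ⟨z, hz⟩ := finite_balls_almost_inter T xx rr hpair (half_pos hε)
  refine ⟨z, ?_, ?_⟩
  · intro f hf
    obtain ⟨y, hyt, hyd⟩ := Set.mem_iUnion₂.1 (htcover hf)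
    have h1 := hz (Sum.inl ⟨y, hyt⟩)
    simp only [hxx, hrr, Sum.elim_inl] at h1
    have h2 : dist f y < ε / 2 := hyd
    calc ‖z - f‖ ≤ ‖z - y‖ + ‖y - f‖ := by
          have h : z - f = (z - y) + (y - f) := by abel
          rw [h]; exact norm_add_le _ _
      _ ≤ (R + ε/2) + ‖y - f‖ := by linarith
      _ ≤ (R + ε/2) + ε/2 := by
          have : ‖y - f‖ = dist f y := by rw [dist_comm, dist_eq_norm]
          linarith [this ▸ h2.le]
      _ = R + ε := by ring
  · intro j
    have h1 := hz (Sum.inr j)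
    simp only [hxx, hrr, Sum.elim_inr] at h1
    linarith

set_option maxHeartbeats 1000000 in
lemma exists_center_attained [CompleteSpace X]
    {Ω : Type u} [MeasurableSpace Ω] {μ : Measure Ω}
    (T : StrongDual ℝ X ≃ₗᵢ[ℝ] Lp ℝ 1 μ)
    {F : Set X} (hne : F.Nonempty) (hF : IsCompact F) (v : X) :
    ∃ x₀ ∈ chebCent Set.univ F, ‖v - x₀‖ = rMax v F - chebRad Set.univ F := by
  have hFb := hF.isBounded
  set rad := chebRad Set.univ F with hrad
  set a := rMax v F - rad with ha
  have hrad0 : 0 ≤ rad := chebRad_nonneg hne hFb ⟨v, trivial⟩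
  have hva : ∀ f ∈ F, ‖v - f‖ ≤ rad + a := by
    intro f hf
    have h1 := le_rMax hFb v hf
    rw [ha]
    linarith
  have ha0 : 0 ≤ a := by
    have h1 := chebRad_le hne hFb (V := Set.univ) (v := v) trivial
    rw [ha]
    linarith
  rcases eq_or_lt_of_le ha0 with heq | hlt
  · refine ⟨v, ⟨trivial, ?_⟩, ?_⟩
    · have h1 := chebRad_le hne hFb (V := Set.univ) (v := v) trivial
      have : rMax v F = rad := by rw [ha] at heq; linarith
      exact this
    · simp only [sub_self, norm_zero]
      rw [ha] at heq
      linarith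
  · set γ : ℕ → ℝ := fun k => a * (1/2)^k with hγ
    have hγpos : ∀ k, 0 < γ k := fun k => by
      rw [hγ]; positivity
    set P : ℕ → X → Prop := fun k y => (∀ f ∈ F, ‖y - f‖ ≤ rad + γ k) ∧ ‖y - v‖ ≤ a + γ k
      with hP
    have hbase : P 0 v := by
      constructor
      · intro f hf
        have := hva f hf
        have hγ0 : γ 0 = a := by rw [hγ]; norm_num
        rw [hγ0]
        linarith
      · simp only [sub_self, norm_zero]
        linarith [hγpos 0]
    have hstep : ∀ (k : ℕ) (y : X), P k y → ∃ y', P (k+1) y' ∧ ‖y' - y‖ ≤ γ k + γ (k+1) := by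
      intro k y hy
      have hγhalf : γ (k+1) = γ k / 2 := by
        rw [hγ]; ring
      obtain ⟨z, hz1, hz2⟩ := compact_balls_almost_inter T hne hF
        (J := Bool) (fun b => if b then v else y)
        (fun b => if b then a + γ (k+1)/2 else γ k + γ (k+1)/2)
        (rad + γ (k+1)/2)
        (by
          intro f hf f' hf'
          have := diam_le_two_rad hne hFb hf hf'
          have := hγpos (k+1)
          linarith)
        (by
          intro b f hf
          cases b
          · simp only [Bool.false_eq_true, if_false]
            linarith [hy.1 f hf, hγpos (k+1)]
          · simp only [if_true]
            linarith [hva f hf, hγpos (k+1)])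
        (by
          intro b b'
          cases b <;> cases b' <;>
            simp only [Bool.false_eq_true, if_false, if_true, sub_self, norm_zero] <;>
            first
              | linarith [hy.2, hγpos k, hγpos (k+1), hlt]
              | (rw [norm_sub_rev]; linarith [hy.2, hγpos k, hγpos (k+1), hlt]))
        (half_pos (hγpos (k+1)))
      refine ⟨z, ⟨?_, ?_⟩, ?_⟩
      · intro f hf
        have := hz1 f hf
        linarith
      · have := hz2 true
        simp only [if_true] at this
        linarith
      · have := hz2 false
        simp only [Bool.false_eq_true, if_false] at this
        linarith
    choose next hnextP hnextd using hstep
    let seq : ∀ _ : ℕ, {y : X // P _ y} := fun k =>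
      Nat.rec (motive := fun k => {y : X // P k y}) ⟨v, hbase⟩
        (fun k prev => ⟨next k prev.1 prev.2, hnextP k prev.1 prev.2⟩) k
    have hseqd : ∀ k, dist ((seq k).1) ((seq (k+1)).1) ≤ (2*a) * (1/2)^k := by
      intro k
      have h := hnextd k (seq k).1 (seq k).2
      have hd : (seq (k+1)).1 = next k (seq k).1 (seq k).2 := rfl
      rw [dist_comm, dist_eq_norm, hd]
      have hsum : γ k + γ (k+1) ≤ 2*a*(1/2)^k := by
        rw [hγ]
        have h0 : (0:ℝ) < (1/2)^k := by positivity
        ring_nf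
        nlinarith [hlt]
      linarith
    have hcauchy : CauchySeq (fun k => (seq k).1) :=
      cauchySeq_of_le_geometric (1/2) (2*a) (by norm_num) hseqd
    obtain ⟨x₀, hx₀⟩ := cauchySeq_tendsto_of_complete hcauchy
    have hγ0 : Tendsto γ atTop (𝓝 0) := by
      have h1 : Tendsto (fun k : ℕ => (1/2 : ℝ)^k) atTop (𝓝 0) :=
        tendsto_pow_atTop_nhds_zero_of_lt_one (by norm_num) (by norm_num)
      have h2 := h1.const_mul a
      rw [mul_zero] at h2
      exact h2
    have hlim1 : ∀ f ∈ F, ‖x₀ - f‖ ≤ rad := by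
      intro f hf
      have h1 : Tendsto (fun k => ‖(seq k).1 - f‖) atTop (𝓝 ‖x₀ - f‖) :=
        (hx₀.sub tendsto_const_nhds).norm
      have h2 : Tendsto (fun k => rad + γ k) atTop (𝓝 (rad + 0)) :=
        tendsto_const_nhds.add hγ0
      rw [add_zero] at h2
      exact le_of_tendsto_of_tendsto' h1 h2 (fun k => (seq k).2.1 f hf)
    have hlim2 : ‖x₀ - v‖ ≤ a := by
      have h1 : Tendsto (fun k => ‖(seq k).1 - v‖) atTop (𝓝 ‖x₀ - v‖) :=
        (hx₀.sub tendsto_const_nhds).norm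
      have h2 : Tendsto (fun k => a + γ k) atTop (𝓝 (a + 0)) :=
        tendsto_const_nhds.add hγ0
      rw [add_zero] at h2
      exact le_of_tendsto_of_tendsto' h1 h2 (fun k => (seq k).2.2)
    have hx0rad : rMax x₀ F = rad := by
      apply le_antisymm
      · exact rMax_le hne x₀ hlim1
      · exact chebRad_le hne hFb trivial
    refine ⟨x₀, ⟨trivial, hx0rad⟩, ?_⟩
    apply le_antisymm
    · rw [norm_sub_rev]
      rw [ha] at hlim2 ⊢
      linarith
    · have h1 := rMax_le_add hne hFb v x₀
      rw [hx0rad] at h1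
      linarith

end Proof

/-- In an `L₁`-predual space, `cent_V(F) ≠ ∅` iff the distance `d(V, cent_X(F))` is
attained. -/
theorem chebCent_restricted_nonempty_iff_of_isL1Predual {X : Type*} [NormedAddCommGroup X]
    [NormedSpace ℝ X] [CompleteSpace X] (hX : IsL1Predual X) (F : Set X) (hne : F.Nonempty)
    (hF : IsCompact F) (V : Set X) (hVne : V.Nonempty) (hVcl : IsClosed V)
    (hVco : Convex ℝ V) :
    (chebCent V F).Nonempty ↔
      ∃ v₀ ∈ V, ∃ x₀ ∈ chebCent (Set.univ : Set X) F,
        ‖v₀ - x₀‖ = setDist' V (chebCent (Set.univ : Set X) F) := by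
  classical
  obtain ⟨Ω, mΩ, μ, ⟨T⟩⟩ := hX
  have hFb := hF.isBounded
  set C : Set X := chebCent (Set.univ : Set X) F with hC
  set rad : ℝ := chebRad (Set.univ : Set X) F with hrad
  have hEx : ∀ v : X, ∃ x₀ ∈ C, ‖v - x₀‖ = rMax v F - rad :=
    fun v => exists_center_attained T hne hF v
  obtain ⟨c₀, hc₀C, -⟩ := hEx 0
  have hCne : C.Nonempty := ⟨c₀, hc₀C⟩
  have hCrad : ∀ x ∈ C, rMax x F = rad := fun x hx => hx.2
  -- distance from a point to C
  have hlb : ∀ (v : X), ∀ x ∈ C, rMax v F - rad ≤ ‖v - x‖ := by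
    intro v x hx
    have h1 := rMax_le_add hne hFb v x
    rw [hCrad x hx] at h1
    linarith
  set D : ℝ := setDist' V C with hD
  have hD_le : ∀ v ∈ V, ∀ x ∈ C, D ≤ ‖v - x‖ := by
    intro v hv x hx
    refine csInf_le ⟨0, ?_⟩ ⟨(v, x), Set.mem_prod.2 ⟨hv, hx⟩, rfl⟩
    rintro - ⟨p, -, rfl⟩
    exact norm_nonneg _
  have hle_D : ∀ c : ℝ, (∀ v ∈ V, ∀ x ∈ C, c ≤ ‖v - x‖) → c ≤ D := by
    intro c hc
    refine le_csInf ((hVne.prod hCne).image _) ?_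
    rintro - ⟨p, hp, rfl⟩
    exact hc p.1 (Set.mem_prod.1 hp).1 p.2 (Set.mem_prod.1 hp).2
  -- the key identity : chebRad V F = rad + D
  have hkey : chebRad V F = rad + D := by
    apply le_antisymm
    · have h1 : chebRad V F - rad ≤ D := by
        apply hle_D
        intro v hv x hx
        have h2 := chebRad_le hne hFb (V := V) hv
        have h3 := rMax_le_add hne hFb v x
        rw [hCrad x hx] at h3
        linarith
      linarith
    · apply le_chebRad hVne
      intro v hv
      obtain ⟨x₀, hx₀C, hx₀d⟩ := hEx v
      have h2 := hD_le v hv x₀ hx₀C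
      linarith [hx₀d ▸ h2]
  constructor
  · rintro ⟨v₀, hv₀V, hv₀r⟩
    obtain ⟨x₀, hx₀C, hx₀d⟩ := hEx v₀
    refine ⟨v₀, hv₀V, x₀, hx₀C, ?_⟩
    rw [hx₀d, hv₀r, hkey]
    ring
  · rintro ⟨v₀, hv₀V, x₀, hx₀C, heq⟩
    refine ⟨v₀, hv₀V, le_antisymm ?_ (chebRad_le hne hFb hv₀V)⟩
    have h1 := rMax_le_add hne hFb v₀ x₀
    rw [hCrad x₀ hx₀C, heq] at h1
    rw [hkey]
    linarith
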